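/- arXiv:2602.23221 — 6 statements merged into one kernel-verified Lean document; each statement's English description precedes it below -/
import Mathlib

section
/- An empirical model e over a measurement scenario admits a global section if and only if it can be realized by a deterministic hidden-variable model, i.e., there exist a finite set Λ, a probability distribution h on Λ, and for each λ ∈ Λ a function g_λ : X → O such that for every context C ∈ M and every s ∈ O^C one has e_C(s) = Σ_{λ : g_λ|_C = s} h(λ). -/
/-- An empirical model over a measurement scenario admits a global section if and only if
it can be realized by a deterministic hidden-variable model. -/
theorem global_section_iff_deterministic_hidden_variable_model
    {X O : Type} [Fintype X] [DecidableEq X] [Fintype O] [DecidableEq O]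
    (M : Finset (Finset X)) (hcover : ∀ x : X, ∃ C ∈ M, x ∈ C)
    (e : (C : Finset X) → ({x // x ∈ C} → O) → ℝ)
    (he0 : ∀ C ∈ M, ∀ s : {x // x ∈ C} → O, 0 ≤ e C s)
    (he1 : ∀ C ∈ M, ∑ s : {x // x ∈ C} → O, e C s = 1) :
    (∃ d : (X → O) → ℝ,
        (∀ t, 0 ≤ d t) ∧ (∑ t : X → O, d t = 1) ∧
        ∀ C ∈ M, ∀ s : {x // x ∈ C} → O,
          e C s = ∑ t ∈ Finset.univ.filter
              (fun t : X → O => (fun x : {x // x ∈ C} => t x.1) = s), d t) ↔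
    (∃ (n : ℕ) (h : Fin n → ℝ) (g : Fin n → X → O),
        (∀ l, 0 ≤ h l) ∧ (∑ l, h l = 1) ∧
        ∀ C ∈ M, ∀ s : {x // x ∈ C} → O,
          e C s = ∑ l ∈ Finset.univ.filter
              (fun l : Fin n => (fun x : {x // x ∈ C} => g l x.1) = s), h l) := by
  constructor
  · rintro ⟨d, hd0, hd1, hdm⟩
    obtain ⟨eq⟩ : Nonempty ((X → O) ≃ Fin (Fintype.card (X → O))) :=
      ⟨Fintype.equivFin _⟩
    refine ⟨Fintype.card (X → O), fun l => d (eq.symm l), fun l => eq.symm l,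
      fun l => hd0 _, ?_, ?_⟩
    · rw [Equiv.sum_comp eq.symm d]; exact hd1
    · intro C hC s
      rw [hdm C hC s]
      refine Finset.sum_nbij' (fun t => eq t) (fun l => eq.symm l) ?_ ?_ ?_ ?_ ?_
      · intro t ht; simp only [Finset.mem_filter, Finset.mem_univ, true_and] at *
        simpa using ht
      · intro l hl; simp only [Finset.mem_filter, Finset.mem_univ, true_and] at *
        exact hl
      · intro t _; simp
      · intro l _; simp
      · intro t _; simp
  · rintro ⟨n, h, g, hh0, hh1, hhm⟩
    refine ⟨fun t => ∑ l ∈ Finset.univ.filter (fun l => g l = t), h l,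
      fun t => Finset.sum_nonneg fun l _ => hh0 l, ?_, ?_⟩
    · rw [Finset.sum_fiberwise_eq_sum_filter Finset.univ Finset.univ g h]
      simpa using hh1
    · intro C hC s
      rw [hhm C hC s, Finset.sum_fiberwise_eq_sum_filter]
      congr 1
      ext l
      simp
end

section
/- An empirical model e over a measurement scenario admits a global section if and only if it can be realized by a factorizable hidden-variable model, i.e., there exist a finite set Λ, a probability distribution h on Λ, and for each λ ∈ Λ and each measurement x ∈ X a probability distribution p^λ_x on O, such that for every context C ∈ M and every s ∈ O^C one has e_C(s) = Σ_{λ ∈ Λ} h(λ) · Π_{x ∈ C} p^λ_x(s(x)). -/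
/-!
A global section `d` is itself a factorizable model: take the global assignments `t : X → O`
as hidden variables, with weights `d t` and deterministic responses `p^t_x = δ_{t x}`.
Conversely, a factorizable model yields the global section `d t = ∑ λ, h λ * ∏ x, p^λ_x (t x)`,
a mixture of product distributions, since the marginal of a product distribution on a
context `C` is the product over `C` of its factors.
-/

open Finset

section ProductDistribution

variable {ι R : Type*} {β : ι → Type*} [Fintype ι] [CommSemiring R]

theorem sum_pi_prod_eq_one [DecidableEq ι] [∀ i, Fintype (β i)] {g : ∀ i, β i → R}
    (hg : ∀ i, ∑ b, g i b = 1) :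
    ∑ t : ∀ i, β i, ∏ i, g i (t i) = 1 := by
  simp [← Fintype.prod_sum, hg]

theorem sum_filter_restrict_eq_prod [DecidableEq ι] [∀ i, Fintype (β i)]
    [∀ i, DecidableEq (β i)] (P : ι → Prop) [DecidablePred P] [Fintype (Subtype P)]
    (s : ∀ i : Subtype P, β i) {g : ∀ i, β i → R} (hg : ∀ i, ∑ b, g i b = 1) :
    ∑ t : ∀ i, β i with (fun i : Subtype P => t i) = s, ∏ i, g i (t i) =
      ∏ i : Subtype P, g i (s i) := by
  -- An arbitrary `Fintype (Subtype P)` lets the lemma apply to `{x // x ∈ C}`, whose instance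
  -- comes from `Finset` rather than from `DecidablePred`.
  obtain rfl : ‹Fintype (Subtype P)› = Subtype.fintype P := Subsingleton.elim _ _
  let G (a : ∀ i : Subtype P, β i) (b : ∀ i : {i // ¬P i}, β i) : R :=
    if a = s then (∏ i, g i.1 (a i)) * ∏ i, g i.1 (b i) else 0
  have hsplit (t : ∀ i, β i) : (if (fun i : Subtype P => t i) = s then ∏ i, g i (t i) else 0) =
      Function.uncurry G (Equiv.piEquivPiSubtypeProd P β t) := by
    rw [← Fintype.prod_subtype_mul_prod_subtype P]; rfl
  rw [sum_filter, Fintype.sum_congr _ _ hsplit, Equiv.sum_comp, Fintype.sum_prod_type,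
    Fintype.sum_eq_single s fun a ha => by simp [G, ha]]
  simp only [Function.uncurry_apply_pair, G, if_true, ← mul_sum,
    sum_pi_prod_eq_one fun i : {i // ¬P i} => hg i, mul_one]

omit [Fintype ι] in
theorem prod_ite_eq_ite_restrict_eq [∀ i, DecidableEq (β i)] (P : ι → Prop) [Fintype (Subtype P)]
    (t : ∀ i, β i) (s : ∀ i : Subtype P, β i) :
    ∏ i : Subtype P, (if t i = s i then (1 : R) else 0) =
      if (fun i : Subtype P => t i) = s then 1 else 0 := by
  simp only [prod_boole, mem_univ, true_implies, funext_iff]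

theorem sum_filter_restrict_eq_sum_mul_prod_ite [DecidableEq ι] [∀ i, Fintype (β i)]
    [∀ i, DecidableEq (β i)] (P : ι → Prop) [Fintype (Subtype P)] (s : ∀ i : Subtype P, β i)
    (d : (∀ i, β i) → R) :
    ∑ t : ∀ i, β i with (fun i : Subtype P => t i) = s, d t =
      ∑ t, d t * ∏ i : Subtype P, (if t i = s i then 1 else 0) := by
  simp only [prod_ite_eq_ite_restrict_eq, mul_ite, mul_one, mul_zero, sum_filter]

end ProductDistribution

theorem global_section_iff_factorizable_hidden_variable_model_general
    {X O : Type} [Fintype X] [DecidableEq X] [Fintype O] [DecidableEq O]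
    (M : Finset (Finset X))
    (e : (C : Finset X) → ({x // x ∈ C} → O) → ℝ) :
    (∃ d : (X → O) → ℝ,
        (∀ t, 0 ≤ d t) ∧ (∑ t : X → O, d t = 1) ∧
        ∀ C ∈ M, ∀ s : {x // x ∈ C} → O,
          e C s = ∑ t ∈ Finset.univ.filter
              (fun t : X → O => (fun x : {x // x ∈ C} => t x.1) = s), d t) ↔
    (∃ (n : ℕ) (h : Fin n → ℝ) (p : Fin n → X → O → ℝ),
        (∀ l, 0 ≤ h l) ∧ (∑ l, h l = 1) ∧
        (∀ l x o, 0 ≤ p l x o) ∧ (∀ l x, ∑ o, p l x o = 1) ∧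
        ∀ C ∈ M, ∀ s : {x // x ∈ C} → O,
          e C s = ∑ l, h l * ∏ x : {x // x ∈ C}, p l x.1 (s x)) := by
  constructor
  · rintro ⟨d, hd0, hd1, hd⟩
    let t := (Fintype.equivFin (X → O)).symm
    refine ⟨_, d ∘ t, fun l x o => if t l x = o then 1 else 0, fun l => hd0 _,
      by rwa [Function.comp_def, t.sum_comp], fun _ _ _ => by positivity, fun _ _ => by simp,
      fun C hC s => ?_⟩
    rw [hd C hC s, sum_filter_restrict_eq_sum_mul_prod_ite (· ∈ C) s d, ← t.sum_comp]
    rfl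
  · rintro ⟨n, h, p, hh0, hh1, hp0, hp1, hp⟩
    refine ⟨fun t => ∑ l, h l * ∏ x, p l x (t x),
      fun t => sum_nonneg fun l _ => mul_nonneg (hh0 l) (prod_nonneg fun x _ => hp0 l x _),
      ?_, fun C hC s => ?_⟩
    · rw [sum_comm]
      simp only [← mul_sum, sum_pi_prod_eq_one (hp1 _), mul_one, hh1]
    · rw [hp C hC s, sum_comm]
      simp only [← mul_sum, sum_filter_restrict_eq_prod _ s (hp1 _)]

/-- An empirical model over a measurement scenario admits a global section if and only if
it can be realized by a factorizable hidden-variable model. -/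
theorem global_section_iff_factorizable_hidden_variable_model
    {X O : Type} [Fintype X] [DecidableEq X] [Fintype O] [DecidableEq O]
    (M : Finset (Finset X)) (hcover : ∀ x : X, ∃ C ∈ M, x ∈ C)
    (e : (C : Finset X) → ({x // x ∈ C} → O) → ℝ)
    (he0 : ∀ C ∈ M, ∀ s : {x // x ∈ C} → O, 0 ≤ e C s)
    (he1 : ∀ C ∈ M, ∑ s : {x // x ∈ C} → O, e C s = 1) :
    (∃ d : (X → O) → ℝ,
        (∀ t, 0 ≤ d t) ∧ (∑ t : X → O, d t = 1) ∧
        ∀ C ∈ M, ∀ s : {x // x ∈ C} → O,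
          e C s = ∑ t ∈ Finset.univ.filter
              (fun t : X → O => (fun x : {x // x ∈ C} => t x.1) = s), d t) ↔
    (∃ (n : ℕ) (h : Fin n → ℝ) (p : Fin n → X → O → ℝ),
        (∀ l, 0 ≤ h l) ∧ (∑ l, h l = 1) ∧
        (∀ l x o, 0 ≤ p l x o) ∧ (∀ l x, ∑ o, p l x o = 1) ∧
        ∀ C ∈ M, ∀ s : {x // x ∈ C} → O,
          e C s = ∑ l, h l * ∏ x : {x // x ∈ C}, p l x.1 (s x)) :=
  global_section_iff_factorizable_hidden_variable_model_general M e
end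

section
/- There is no function d : {0,1}⁴ → ℝ (whose arguments are outcome values a₁, a₂, b₁, b₂ assigned to the measurements A₁, A₂, B₁, B₂) satisfying d ≥ 0 and Σ d = 1 whose marginals reproduce the CHSH empirical model: Σ_{a₂,b₂} d(a₁,a₂,b₁,b₂) = 1/2 if a₁ = b₁ and 0 otherwise; Σ_{a₂,b₁} d(a₁,a₂,b₁,b₂) = 3/8 if a₁ = b₂ and 1/8 otherwise; Σ_{a₁,b₂} d(a₁,a₂,b₁,b₂) = 3/8 if a₂ = b₁ and 1/8 otherwise; Σ_{a₁,b₁} d(a₁,a₂,b₁,b₂) = 1/8 if a₂ = b₂ and 3/8 otherwise. Hence this empirical model admits no global section and is Bell nonlocal. -/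
/-- The CHSH empirical model admits no global section: there is no probability
distribution on joint deterministic assignments `(a₁, a₂, b₁, b₂)` of outcomes to the
four measurements whose marginals reproduce the CHSH table.  Hence the model is
Bell nonlocal. -/
theorem chsh_no_global_section :
    ¬ ∃ d : Bool → Bool → Bool → Bool → ℝ,
      (∀ a₁ a₂ b₁ b₂, 0 ≤ d a₁ a₂ b₁ b₂) ∧
      (∑ a₁, ∑ a₂, ∑ b₁, ∑ b₂, d a₁ a₂ b₁ b₂ = 1) ∧
      (∀ a₁ b₁, ∑ a₂, ∑ b₂, d a₁ a₂ b₁ b₂ = if a₁ = b₁ then 1/2 else 0) ∧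
      (∀ a₁ b₂, ∑ a₂, ∑ b₁, d a₁ a₂ b₁ b₂ = if a₁ = b₂ then 3/8 else 1/8) ∧
      (∀ a₂ b₁, ∑ a₁, ∑ b₂, d a₁ a₂ b₁ b₂ = if a₂ = b₁ then 3/8 else 1/8) ∧
      (∀ a₂ b₂, ∑ a₁, ∑ b₁, d a₁ a₂ b₁ b₂ = if a₂ = b₂ then 1/8 else 3/8) := by
  rintro ⟨d, hpos, _, h1, h2, h3, h4⟩
  have eh1ff := h1 false false
  have eh1ft := h1 false true
  have eh1tf := h1 true false
  have eh1tt := h1 true true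
  have eh2ff := h2 false false
  have eh2ft := h2 false true
  have eh2tf := h2 true false
  have eh2tt := h2 true true
  have eh3ff := h3 false false
  have eh3ft := h3 false true
  have eh3tf := h3 true false
  have eh3tt := h3 true true
  have eh4ff := h4 false false
  have eh4ft := h4 false true
  have eh4tf := h4 true false
  have eh4tt := h4 true true
  simp only [Fintype.sum_bool, if_true, if_false] at eh1ff eh1ft eh1tf eh1tt eh2ff eh2ft eh2tf eh2tt eh3ff eh3ft eh3tf eh3tt eh4ff eh4ft eh4tf eh4tt
  norm_num at eh1ff eh1ft eh1tf eh1tt eh2ff eh2ft eh2tf eh2tt eh3ff eh3ft eh3tf eh3tt eh4ff eh4ft eh4tf eh4tt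
  have p1 := hpos false false false false
  have p2 := hpos true true true true
  have p3 := hpos false true true false
  have p4 := hpos true false false true
  have p5 := hpos false false true true
  have p6 := hpos true true false false
  have p7 := hpos false true false true
  have p8 := hpos true false true false
  have p9 := hpos false false false true
  have p10 := hpos false false true false
  have p11 := hpos false true false false
  have p12 := hpos false true true true
  have p13 := hpos true false false false
  have p14 := hpos true false true true
  have p15 := hpos true true false true
  have p16 := hpos true true true false
  linarith
end

section
/- Let H be a complex Hilbert space and let A₀, A₁, B₀, B₁ be bounded self-adjoint operators on H such that A₀² = A₁² = B₀² = B₁² = 1 and A_i commutes with B_j for all i, j ∈ {0,1}. Then the operator norm of A₀B₀ + A₀B₁ + A₁B₀ − A₁B₁ is at most 2√2 (Tsirelson's bound). -/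
/-- Tsirelson's bound: if `A₀, A₁, B₀, B₁` are bounded self-adjoint operators on a
complex Hilbert space squaring to the identity, with each `Aᵢ` commuting with each `Bⱼ`,
then the CHSH Bell operator `A₀B₀ + A₀B₁ + A₁B₀ − A₁B₁` has operator norm at most `2√2`. -/
theorem tsirelson_bound {H : Type} [NormedAddCommGroup H] [InnerProductSpace ℂ H]
    [CompleteSpace H]
    (A B : Fin 2 → H →L[ℂ] H)
    (hA : ∀ i, IsSelfAdjoint (A i)) (hB : ∀ j, IsSelfAdjoint (B j))
    (hA2 : ∀ i, A i * A i = 1) (hB2 : ∀ j, B j * B j = 1)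
    (hcomm : ∀ i j, Commute (A i) (B j)) :
    ‖A 0 * B 0 + A 0 * B 1 + A 1 * B 0 - A 1 * B 1‖ ≤ 2 * Real.sqrt 2 := by
  rcases subsingleton_or_nontrivial H with hs | hn
  · have : (A 0 * B 0 + A 0 * B 1 + A 1 * B 0 - A 1 * B 1) = 0 := Subsingleton.elim _ _
    rw [this, norm_zero]
    positivity
  set C := A 0 * B 0 + A 0 * B 1 + A 1 * B 0 - A 1 * B 1 with hCdef
  have hBA : ∀ i j, B j * A i = A i * B j := fun i j => ((hcomm i j).symm).eq
  have hswap : ∀ i j (x : H →L[ℂ] H), B j * (A i * x) = A i * (B j * x) := by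
    intro i j x; rw [← mul_assoc, hBA, mul_assoc]
  have hA2' : ∀ i (x : H →L[ℂ] H), A i * (A i * x) = x := by
    intro i x; rw [← mul_assoc, hA2, one_mul]
  have hB2' : ∀ j (x : H →L[ℂ] H), B j * (B j * x) = x := by
    intro j x; rw [← mul_assoc, hB2, one_mul]
  -- self-adjointness of C
  have hCsa : star C = C := by
    simp only [hCdef, star_sub, star_add, star_mul, (hA 0).star_eq, (hA 1).star_eq,
      (hB 0).star_eq, (hB 1).star_eq, hBA]
  -- key algebraic identity
  have key : C * C = 4 - (A 0 * A 1 - A 1 * A 0) * (B 0 * B 1 - B 1 * B 0) := by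
    have h4 : (4 : H →L[ℂ] H) = 1 + 1 + 1 + 1 := by norm_num
    simp only [hCdef, h4, mul_sub, sub_mul, mul_add, add_mul, mul_assoc, hswap, hA2', hB2',
      hA2, hB2, mul_one]
    abel
  -- norms of A i, B j are 1
  have hnA : ∀ i, ‖A i‖ = 1 := by
    intro i
    have := CStarRing.norm_star_mul_self (x := A i)
    rw [(hA i).star_eq, hA2, norm_one] at this
    nlinarith [norm_nonneg (A i)]
  have hnB : ∀ j, ‖B j‖ = 1 := by
    intro j
    have := CStarRing.norm_star_mul_self (x := B j)
    rw [(hB j).star_eq, hB2, norm_one] at this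
    nlinarith [norm_nonneg (B j)]
  have hn8 : ‖C‖ * ‖C‖ ≤ 8 := by
    have h1 : ‖C‖ * ‖C‖ = ‖C * C‖ := by
      rw [← CStarRing.norm_star_mul_self, hCsa]
    rw [h1, key]
    have hcommA : ‖A 0 * A 1 - A 1 * A 0‖ ≤ 2 := by
      calc ‖A 0 * A 1 - A 1 * A 0‖ ≤ ‖A 0 * A 1‖ + ‖A 1 * A 0‖ := norm_sub_le _ _
        _ ≤ ‖A 0‖ * ‖A 1‖ + ‖A 1‖ * ‖A 0‖ := add_le_add (norm_mul_le _ _) (norm_mul_le _ _)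
        _ = 2 := by rw [hnA 0, hnA 1]; norm_num
    have hcommB : ‖B 0 * B 1 - B 1 * B 0‖ ≤ 2 := by
      calc ‖B 0 * B 1 - B 1 * B 0‖ ≤ ‖B 0 * B 1‖ + ‖B 1 * B 0‖ := norm_sub_le _ _
        _ ≤ ‖B 0‖ * ‖B 1‖ + ‖B 1‖ * ‖B 0‖ := add_le_add (norm_mul_le _ _) (norm_mul_le _ _)
        _ = 2 := by rw [hnB 0, hnB 1]; norm_num
    have h4 : ‖(4 : H →L[ℂ] H)‖ ≤ 4 := by
      have : (4 : H →L[ℂ] H) = 1 + 1 + 1 + 1 := by norm_num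
      rw [this]
      have h1 : ‖(1 : H →L[ℂ] H)‖ = 1 := norm_one
      calc ‖(1 : H →L[ℂ] H) + 1 + 1 + 1‖ ≤ ‖(1:H →L[ℂ] H)+1+1‖ + ‖(1:H →L[ℂ] H)‖ := norm_add_le _ _
        _ ≤ ‖(1:H →L[ℂ] H)+1‖ + ‖(1:H →L[ℂ] H)‖ + ‖(1:H →L[ℂ] H)‖ := by gcongr; exact norm_add_le _ _
        _ ≤ ‖(1:H →L[ℂ] H)‖ + ‖(1:H →L[ℂ] H)‖ + ‖(1:H →L[ℂ] H)‖ + ‖(1:H →L[ℂ] H)‖ := by gcongr; exact norm_add_le _ _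
        _ = 4 := by rw [h1]; norm_num
    calc ‖(4 : H →L[ℂ] H) - (A 0 * A 1 - A 1 * A 0) * (B 0 * B 1 - B 1 * B 0)‖
        ≤ ‖(4 : H →L[ℂ] H)‖ + ‖(A 0 * A 1 - A 1 * A 0) * (B 0 * B 1 - B 1 * B 0)‖ :=
          norm_sub_le _ _
      _ ≤ 4 + ‖A 0 * A 1 - A 1 * A 0‖ * ‖B 0 * B 1 - B 1 * B 0‖ :=
          add_le_add h4 (norm_mul_le _ _)
      _ ≤ 8 := by nlinarith [norm_nonneg (A 0 * A 1 - A 1 * A 0), norm_nonneg (B 0 * B 1 - B 1 * B 0)]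
  nlinarith [norm_nonneg C, Real.sq_sqrt (by norm_num : (2:ℝ) ≥ 0), Real.sqrt_nonneg 2]
end

section
/- There exist unit vectors u₀, u₁, u₂, u₃, u₄ and a unit vector ψ in the 3-dimensional real Euclidean space such that ⟨u_i, u_{i+1 mod 5}⟩ = 0 for all i ∈ ℤ/5ℤ and Σ_{i=0}^{4} ⟨ψ, u_i⟩² = √5. Consequently the Lovász number of the 5-cycle satisfies ϑ(C₅) ≥ √5. -/
/-!
Place five unit vectors as the ribs of an umbrella around the handle `ψ = e₃`: all at the same
height `h`, with horizontal projections at the angles `4πi/5`. Consecutive ribs are then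
orthogonal exactly when `r² cos (4π/5) + h² = 0` with `r² + h² = 1`, and since
`cos (4π/5) = -(1 + √5)/4` this forces `h² = 1/√5`. Every rib has `⟨ψ, uᵢ⟩ = h`, so the sum is
`5 h² = √5`.
-/

open Complex ComplexConjugate Real

noncomputable def umbrellaRib (r h : ℝ) (z : ℂ) : EuclideanSpace ℝ (Fin 3) :=
  !₂[r * z.re, r * z.im, h]

lemma inner_umbrellaRib (r h : ℝ) (z w : ℂ) :
    inner ℝ (umbrellaRib r h z) (umbrellaRib r h w) = r ^ 2 * (conj z * w).re + h ^ 2 := by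
  simp [umbrellaRib, EuclideanSpace.inner_eq_star_dotProduct, Fin.sum_univ_three, dotProduct]
  ring

lemma inner_umbrellaRib_circle_mul (r h : ℝ) (z w : Circle) :
    inner ℝ (umbrellaRib r h z) (umbrellaRib r h ↑(z * w)) = r ^ 2 * (w : ℂ).re + h ^ 2 := by
  rw [inner_umbrellaRib, ← Circle.coe_inv_eq_conj, ← Circle.coe_mul, inv_mul_cancel_left]

lemma norm_umbrellaRib (r h : ℝ) (z : Circle) : ‖umbrellaRib r h z‖ = √(r ^ 2 + h ^ 2) := by
  have h_self := inner_umbrellaRib_circle_mul r h z 1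
  rw [mul_one, Circle.coe_one, one_re, mul_one] at h_self
  rw [norm_eq_sqrt_real_inner, h_self]

lemma inner_single_two_umbrellaRib (r h : ℝ) (z : ℂ) :
    inner ℝ (EuclideanSpace.single 2 1) (umbrellaRib r h z) = h := by
  simp [umbrellaRib, EuclideanSpace.inner_single_left]

section Umbrella

variable {N : ℕ} [NeZero N] {r h : ℝ} (k : ZMod N)

/-- Rib `i` points in the horizontal direction `exp (2πi k i / N)`. -/
noncomputable def umbrella (r h : ℝ) (i : ZMod N) : EuclideanSpace ℝ (Fin 3) :=
  umbrellaRib r h (ZMod.toCircle (k * i))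

lemma norm_umbrella (hunit : r ^ 2 + h ^ 2 = 1) (i : ZMod N) : ‖umbrella k r h i‖ = 1 := by
  rw [umbrella, norm_umbrellaRib, hunit, Real.sqrt_one]

lemma inner_umbrella_add_one (horth : r ^ 2 * (ZMod.toCircle k : ℂ).re + h ^ 2 = 0)
    (i : ZMod N) : inner ℝ (umbrella k r h i) (umbrella k r h (i + 1)) = 0 := by
  rw [umbrella, umbrella, mul_add, mul_one, AddChar.map_add_eq_mul, inner_umbrellaRib_circle_mul,
    horth]

lemma sum_inner_single_two_umbrella_sq :
    ∑ i, inner ℝ (EuclideanSpace.single 2 1) (umbrella k r h i) ^ 2 = N * h ^ 2 := by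
  simp [umbrella, inner_single_two_umbrellaRib]

end Umbrella

lemma re_toCircle_two_zmod_five : (ZMod.toCircle (2 : ZMod 5) : ℂ).re = -(1 + √5) / 4 := by
  rw [show (2 : ZMod 5) = ((2 : ℤ) : ZMod 5) by rfl, ZMod.toCircle_intCast,
    show 2 * π * I * ((2 : ℤ) : ℂ) / ((5 : ℕ) : ℂ) = ((π - π / 5 : ℝ) : ℂ) * I by push_cast; ring,
    exp_ofReal_mul_I_re, Real.cos_pi_sub, cos_pi_div_five]
  ring

/-- The Lovász umbrella: there exist unit vectors `u₀, …, u₄` in `ℝ³` with consecutive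
(mod 5) vectors orthogonal, and a unit handle `ψ`, such that `Σ_i ⟨ψ, u i⟩² = √5`.
Consequently the Lovász number of the 5-cycle satisfies `ϑ(C₅) ≥ √5`. -/
theorem lovasz_umbrella_C5 :
    ∃ (u : ZMod 5 → EuclideanSpace ℝ (Fin 3)) (ψ : EuclideanSpace ℝ (Fin 3)),
      (∀ i, ‖u i‖ = 1) ∧ ‖ψ‖ = 1 ∧
      (∀ i, (inner ℝ (u i) (u (i + 1)) : ℝ) = 0) ∧
      ∑ i, (inner ℝ ψ (u i) : ℝ) ^ 2 = Real.sqrt 5 := by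
  have hs : √5 ^ 2 = 5 := sq_sqrt (by norm_num)
  have hh : √(√5)⁻¹ ^ 2 = (√5)⁻¹ := sq_sqrt (by positivity)
  have hr : √(1 - (√5)⁻¹) ^ 2 = 1 - (√5)⁻¹ :=
    sq_sqrt (sub_nonneg.mpr (inv_le_one_of_one_le₀ (one_le_sqrt.mpr (by norm_num))))
  have hunit : √(1 - (√5)⁻¹) ^ 2 + √(√5)⁻¹ ^ 2 = 1 := by rw [hr, hh]; ring
  have horth : √(1 - (√5)⁻¹) ^ 2 * (ZMod.toCircle (2 : ZMod 5) : ℂ).re + √(√5)⁻¹ ^ 2 = 0 := by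
    rw [hr, hh, re_toCircle_two_zmod_five]
    field_simp
    linear_combination -hs
  refine ⟨umbrella 2 _ _, EuclideanSpace.single 2 1, norm_umbrella 2 hunit, by simp,
    inner_umbrella_add_one 2 horth, ?_⟩
  rw [sum_inner_single_two_umbrella_sq, hh]
  field_simp
  linear_combination -hs
end

section
/- For every natural number d ≥ 3, there is no function f from the unit vectors of the d-dimensional real Euclidean space to {0,1} such that (i) f(x) = f(y) whenever x and y span the same one-dimensional subspace (i.e., y = c·x for some scalar c), and (ii) for every orthonormal basis e₁, …, e_d of the space, exactly one of f(e₁), …, f(e_d) equals 1 (i.e., Σ_i f(e_i) = 1). -/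
/-!
Choose three coordinate vectors of `ℝ^d`, one of them of colour 1. The remaining coordinate
vectors then have colour 0, so completing an orthonormal basis of the span of the three by them
shows that `f` sums to 1 over every orthonormal basis of that three-dimensional subspace. There it
suffices to look at vectors with integer coordinates. If `z` has colour 1, forcing along a chain of
orthogonality relations among vectors with coordinates in `{0, ±1, ±2}` shows that `x + z` has
colour 0, and by the reflection `x ↦ -x` so does `-x + z`; together with `y` they form an
orthogonal triad without colour 1. Hence no coordinate vector has colour 1, which contradicts the
triad `x, y, z`.
-/

open Function Matrix Module Set Submodule
open scoped InnerProductSpace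

section Geometry

variable {E : Type*} [NormedAddCommGroup E] [InnerProductSpace ℝ E]

theorem Orthonormal.extend {ι κ : Type*} {b : ι → E} (hb : Orthonormal ℝ b) {τ : κ → ι}
    (hτ : Injective τ) {t : κ → E} (ht : Orthonormal ℝ t)
    (hspan : ∀ k, t k ∈ span ℝ (range (b ∘ τ))) : Orthonormal ℝ (extend τ t b) := by
  classical
  have hperp : ∀ i ∉ range τ, ∀ k, ⟪t k, b i⟫_ℝ = 0 := fun i hi k =>
    mem_orthogonal_singleton_iff_inner_left.1 <| span_le.2 (by
      rintro _ ⟨l, rfl⟩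
      exact mem_orthogonal_singleton_iff_inner_left.2
        (hb.inner_eq_zero fun h => hi ⟨l, h⟩)) (hspan k)
  rw [orthonormal_iff_ite] at hb ht ⊢
  intro i j
  by_cases hi : i ∈ range τ <;> by_cases hj : j ∈ range τ
  · obtain ⟨k, rfl⟩ := hi
    obtain ⟨l, rfl⟩ := hj
    simp [hτ.extend_apply, ht, hτ.eq_iff]
  · obtain ⟨k, rfl⟩ := hi
    rw [hτ.extend_apply, extend_apply' _ _ _ hj, hperp j hj, if_neg fun h => hj ⟨k, h⟩]
  · obtain ⟨l, rfl⟩ := hj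
    rw [hτ.extend_apply, extend_apply' _ _ _ hi, real_inner_comm, hperp i hi,
      if_neg fun h => hi ⟨l, h.symm⟩]
  · rw [extend_apply' _ _ _ hi, extend_apply' _ _ _ hj, hb]

theorem OrthonormalBasis.sum_apply_eq_one_of_mem_span {ι κ : Type*} [Fintype ι] [Fintype κ]
    {f : E → ℕ} (hf : ∀ b : OrthonormalBasis ι ℝ E, ∑ i, f (b i) = 1)
    (b : OrthonormalBasis ι ℝ E) (τ : κ ↪ ι) (hτ : ∃ k, f (b (τ k)) ≠ 0)
    {t : κ → E} (ht : Orthonormal ℝ t) (hspan : ∀ k, t k ∈ span ℝ (range (b ∘ τ))) :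
    ∑ k, f (t k) = 1 := by
  classical
  obtain ⟨k, hk⟩ := hτ
  have : FiniteDimensional ℝ E := b.toBasis.finiteDimensional_of_finite
  have : Nonempty ι := ⟨τ k⟩
  have hV := b.orthonormal.extend τ.injective ht hspan
  have hV_span := (hV.linearIndependent.span_eq_top_of_card_eq_finrank
    (finrank_eq_card_basis b.toBasis).symm).ge
  have hsplit : ∀ v : ι → E, ∑ i, f (v i) =
      ∑ k, f (v (τ k)) + ∑ i ∈ (Finset.univ.map τ)ᶜ, f (v i) := fun v => by
    rw [← Finset.sum_add_sum_compl (Finset.univ.map τ), Finset.sum_map]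
  have hV_sum := hf (OrthonormalBasis.mk hV hV_span)
  rw [OrthonormalBasis.coe_mk, hsplit] at hV_sum
  have hb_sum := hsplit b ▸ hf b
  have hrest : ∑ i ∈ (Finset.univ.map τ)ᶜ, f (extend τ t b i) =
      ∑ i ∈ (Finset.univ.map τ)ᶜ, f (b i) := Finset.sum_congr rfl fun i hi => by
    rw [extend_apply' _ _ _ fun ⟨l, hl⟩ => Finset.mem_compl.1 hi (by simp [← hl])]
  simp only [τ.injective.extend_apply, hrest] at hV_sum
  have := Finset.single_le_sum (f := fun k => f (b (τ k))) (fun _ _ => Nat.zero_le _)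
    (Finset.mem_univ k)
  omega

theorem orthonormal_inv_norm_smul {ι : Type*} {v : ι → E} (hv : ∀ i, v i ≠ 0)
    (horth : Pairwise fun i j => ⟪v i, v j⟫_ℝ = 0) : Orthonormal ℝ fun i => ‖v i‖⁻¹ • v i :=
  ⟨fun i => norm_smul_inv_norm (hv i), fun i j hij => by
    simp [real_inner_smul_left, real_inner_smul_right, horth hij]⟩

theorem Orthonormal.inner_sum_intCast_smul {n : Type*} [Fintype n] {w : n → E}
    (hw : Orthonormal ℝ w) (p q : n → ℤ) :
    ⟪∑ k, (p k : ℝ) • w k, ∑ k, (q k : ℝ) • w k⟫_ℝ = ((p ⬝ᵥ q : ℤ) : ℝ) := by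
  simp [hw.inner_sum, dotProduct]

end Geometry

abbrev IsTriad (p q r : Fin 3 → ℤ) : Prop :=
  p ≠ 0 ∧ q ≠ 0 ∧ r ≠ 0 ∧ p ⬝ᵥ q = 0 ∧ p ⬝ᵥ r = 0 ∧ q ⬝ᵥ r = 0

def IsKSColoring (F : (Fin 3 → ℤ) → ℕ) : Prop :=
  ∀ p q r, IsTriad p q r → F p + F q + F r = 1

namespace IsKSColoring

variable {F : (Fin 3 → ℤ) → ℕ}

theorem comp (hF : IsKSColoring F) {σ : (Fin 3 → ℤ) → Fin 3 → ℤ}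
    (hσ : ∀ p q, σ p ⬝ᵥ σ q = p ⬝ᵥ q) : IsKSColoring (F ∘ σ) := by
  have hne : ∀ p, p ≠ 0 → σ p ≠ 0 := fun p hp h0 =>
    hp (dotProduct_self_eq_zero.1 (by rw [← hσ, h0, zero_dotProduct]))
  rintro p q r ⟨hp, hq, hr, hpq, hpr, hqr⟩
  exact hF _ _ _ ⟨hne p hp, hne q hq, hne r hr, by rwa [hσ], by rwa [hσ], by rwa [hσ]⟩

theorem eq_zero_of_eq_one (hF : IsKSColoring F) {p : Fin 3 → ℤ} (q : Fin 3 → ℤ) (hp : F p = 1)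
    (h : p ≠ 0 ∧ q ≠ 0 ∧ p ⬝ᵥ q = 0 := by decide) : F q = 0 := by
  obtain ⟨hp0, hq0, hpq⟩ := h
  have hr : p ⨯₃ q ≠ 0 := fun h0 => by
    have := cross_dot_cross p q p q
    rw [h0, zero_dotProduct, hpq, zero_mul, sub_zero, eq_comm, mul_eq_zero,
      dotProduct_self_eq_zero, dotProduct_self_eq_zero] at this
    tauto
  have := hF p q _ ⟨hp0, hq0, hr, hpq, dot_self_cross p q, dot_cross_self p q⟩
  omega

theorem eq_one_of_eq_zero (hF : IsKSColoring F) {p q : Fin 3 → ℤ} (r : Fin 3 → ℤ)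
    (hp : F p = 0) (hq : F q = 0) (h : IsTriad p q r := by decide) : F r = 1 := by
  have := hF p q r h
  omega

-- `zabc` / `oabc`: the vector `(a, b, c)` has colour 0 / 1, with `m` marking a minus sign.
theorem false_of_eq_one_of_eq_one (hF : IsKSColoring F) (o001 : F ![0, 0, 1] = 1)
    (o101 : F ![1, 0, 1] = 1) : False := by
  have z1m10 := hF.eq_zero_of_eq_one ![1, -1, 0] o001
  have z110 := hF.eq_zero_of_eq_one ![1, 1, 0] o001
  have z010 := hF.eq_zero_of_eq_one ![0, 1, 0] o001
  have z100 := hF.eq_zero_of_eq_one ![1, 0, 0] o001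
  have z1m1m1 := hF.eq_zero_of_eq_one ![1, -1, -1] o101
  have z11m1 := hF.eq_zero_of_eq_one ![1, 1, -1] o101
  have z10m1 := hF.eq_zero_of_eq_one ![1, 0, -1] o101
  have o112 := hF.eq_one_of_eq_zero ![1, 1, 2] z1m10 z11m1
  have z02m1 := hF.eq_zero_of_eq_one ![0, 2, -1] o112
  have o012 := hF.eq_one_of_eq_zero ![0, 1, 2] z02m1 z100
  have z1m21 := hF.eq_zero_of_eq_one ![1, -2, 1] o012
  have o111 := hF.eq_one_of_eq_zero ![1, 1, 1] z1m21 z10m1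
  have z01m1 := hF.eq_zero_of_eq_one ![0, 1, -1] o111
  have o211 := hF.eq_one_of_eq_zero ![2, 1, 1] z01m1 z1m1m1
  have o011 := hF.eq_one_of_eq_zero ![0, 1, 1] z01m1 z100
  have z10m2 := hF.eq_zero_of_eq_one ![1, 0, -2] o211
  have o201 := hF.eq_one_of_eq_zero ![2, 0, 1] z010 z10m2
  have z1m11 := hF.eq_zero_of_eq_one ![1, -1, 1] o011
  have z1m1m2 := hF.eq_zero_of_eq_one ![1, -1, -2] o201
  have := hF.eq_one_of_eq_zero ![1, 1, 0] z1m1m2 z1m11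
  omega

theorem apply_axis_eq_zero (hF : IsKSColoring F) : F ![0, 0, 1] = 0 := by
  by_contra h
  have o001 : F ![0, 0, 1] = 1 := by
    have := hF ![1, 0, 0] ![0, 1, 0] ![0, 0, 1] (by decide)
    omega
  have z010 := hF.eq_zero_of_eq_one ![0, 1, 0] o001
  have := hF ![1, 0, 1] ![-1, 0, 1] ![0, 1, 0] (by decide)
  obtain o101 | om101 : F ![1, 0, 1] = 1 ∨ F ![-1, 0, 1] = 1 := by omega
  · exact hF.false_of_eq_one_of_eq_one o001 o101
  · refine (hF.comp (σ := fun p => ![-p 0, p 1, p 2]) fun p q => ?_).false_of_eq_one_of_eq_one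
      o001 om101
    simp [dotProduct, Fin.sum_univ_three]

end IsKSColoring

theorem not_isKSColoring (F : (Fin 3 → ℤ) → ℕ) : ¬ IsKSColoring F := fun hF => by
  have z100 : F ![1, 0, 0] = 0 := (hF.comp (σ := fun p => ![p 2, p 1, p 0])
    fun p q => by simp [dotProduct, Fin.sum_univ_three]; ring).apply_axis_eq_zero
  have z010 : F ![0, 1, 0] = 0 := (hF.comp (σ := fun p => ![p 0, p 2, p 1])
    fun p q => by simp [dotProduct, Fin.sum_univ_three]; ring).apply_axis_eq_zero
  have := hF ![1, 0, 0] ![0, 1, 0] ![0, 0, 1] (by decide)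
  have z001 := hF.apply_axis_eq_zero
  omega

theorem isKSColoring_of_orthonormal {E : Type*} [NormedAddCommGroup E] [InnerProductSpace ℝ E]
    {w : Fin 3 → E} (hw : Orthonormal ℝ w) {f : E → ℕ}
    (hf : ∀ t : Fin 3 → E, Orthonormal ℝ t → (∀ k, t k ∈ span ℝ (range w)) → ∑ k, f (t k) = 1) :
    IsKSColoring fun p => f (‖∑ k, (p k : ℝ) • w k‖⁻¹ • ∑ k, (p k : ℝ) • w k) := by
  set v : (Fin 3 → ℤ) → E := fun p => ∑ k, (p k : ℝ) • w k
  have hv : ∀ p q, ⟪v p, v q⟫_ℝ = ((p ⬝ᵥ q : ℤ) : ℝ) := hw.inner_sum_intCast_smul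
  have hv0 : ∀ p, p ≠ 0 → v p ≠ 0 := fun p hp h0 => by
    have := hv p p
    rw [h0, inner_zero_left, eq_comm, Int.cast_eq_zero, dotProduct_self_eq_zero] at this
    exact hp this
  rintro p q r ⟨hp, hq, hr, hpq, hpr, hqr⟩
  have ht := orthonormal_inv_norm_smul (v := fun i => v (![p, q, r] i))
    (by intro i; fin_cases i <;> simp [hv0, hp, hq, hr]) (by
      intro i j hij
      fin_cases i <;> fin_cases j <;> simp_all [dotProduct_comm])
  have := hf _ ht fun i => smul_mem _ _ (sum_mem fun k _ => smul_mem _ _ (subset_span ⟨k, rfl⟩))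
  rwa [Fin.sum_univ_three] at this

/-- The Kochen–Specker theorem: for `d ≥ 3` there is no `{0,1}`-valued assignment on the
unit vectors of `ℝ^d` that is constant on rays (vectors spanning the same one-dimensional
subspace) and selects exactly one vector in every orthonormal basis. -/
theorem kochen_specker (d : ℕ) (hd : 3 ≤ d) :
    ¬ ∃ f : EuclideanSpace ℝ (Fin d) → ℕ,
      (∀ x, ‖x‖ = 1 → f x = 0 ∨ f x = 1) ∧
      (∀ x y : EuclideanSpace ℝ (Fin d),
        ‖x‖ = 1 → ‖y‖ = 1 → (∃ c : ℝ, y = c • x) → f x = f y) ∧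
      (∀ b : OrthonormalBasis (Fin d) ℝ (EuclideanSpace ℝ (Fin d)),
        ∑ i, f (b i) = 1) := by
  rintro ⟨f, -, -, hf⟩
  set b := EuclideanSpace.basisFun (Fin d) ℝ
  obtain ⟨a, ha⟩ : ∃ a, f (b a) ≠ 0 := by
    by_contra! h
    simpa [h] using hf b
  let τ : Fin 3 ↪ Fin d := (Fin.castLEEmb hd).trans (Equiv.swap (Fin.castLE hd 0) a).toEmbedding
  have hτ : ∃ k, f (b (τ k)) ≠ 0 := ⟨0, by simpa [τ] using ha⟩
  exact not_isKSColoring _ (isKSColoring_of_orthonormal (b.orthonormal.comp τ τ.injective)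
    fun _ ht hspan => b.sum_apply_eq_one_of_mem_span hf τ hτ ht hspan)
end
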